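/- Let (X,T) be a TDS. The following are equivalent: (1) (X,T) is mean proximal; (2) (X,T) is mean asymptotic; (3) every (T×T)-invariant Borel probability measure λ on X × X satisfies λ(Δ_X) = 1, where Δ_X = {(x,x) : x ∈ X}; (4) (X,T) is uniquely ergodic and its unique invariant measure is the Dirac measure δ_{x₀} at a fixed point x₀ of T; (5) the product system (X × X, T × T) is mean proximal. -/

import Mathlib

/-!
Mean proximality upgrades to mean asymptoticity by compactness: every pair reaches a small
average distance within a uniformly bounded time, and chaining such blocks controls all long
averages. Mean asymptoticity forces a fixed point `x₀` (a minimum of `x ↦ d(x, Tx)`), and by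
dominated convergence every invariant measure integrates `d(·, x₀)` to zero, hence is `δ_{x₀}`.
The marginals of an invariant measure on `X × X` are then `δ_{x₀}`, so it lives on the diagonal.
Conversely, a pair with positive lower mean distance yields, by the Krylov–Bogolyubov procedure
(weak limits of empirical measures along its orbit), an invariant measure on `X × X` giving the
distance a positive integral, so not carried by the diagonal. For the product system, mean
proximality of the diagonal pairs is mean proximality of `T`, and mean asymptoticity passes to the
product through `d((x, x'), (y, y')) ≤ d(x, y) + d(x', y')`.
-/

open Filter Metric Set MeasureTheory

/-- Birkhoff average of the distance between the orbits of `x` and `y`. -/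
noncomputable def birkhoffAvg {X : Type*} [PseudoMetricSpace X]
    (T : X → X) (x y : X) (N : ℕ) : ℝ :=
  (∑ k ∈ Finset.range N, dist (T^[k] x) (T^[k] y)) / N

/-- A pair `(x,y)` is mean proximal if
`liminf_{N→∞} (1/N) ∑_{k<N} d(T^k x, T^k y) = 0`. -/
def MeanProximalPair {X : Type*} [PseudoMetricSpace X] (T : X → X) (x y : X) : Prop :=
  liminf (birkhoffAvg T x y) atTop = 0

open Topology

section BirkhoffAverage

variable {Y : Type*} {S : Y → Y} {g : Y → ℝ}

theorem birkhoffAverage_comp_self (n : ℕ) (y : Y) :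
    birkhoffAverage ℝ S (g ∘ S) n y = birkhoffAverage ℝ S g n (S y) := by
  simp [birkhoffAverage, birkhoffSum, ← Function.iterate_succ_apply' S, Function.iterate_succ_apply]

theorem birkhoffAverage_le_of_le {D : ℝ} (hgD : ∀ y, g y ≤ D) {n : ℕ} (hn : n ≠ 0) (y : Y) :
    birkhoffAverage ℝ S g n y ≤ D := by
  rw [birkhoffAverage, birkhoffSum, smul_eq_mul, inv_mul_le_iff₀ (by positivity)]
  simpa using Finset.sum_le_card_nsmul (Finset.range n) _ _ fun k _ => hgD (S^[k] y)

theorem le_birkhoffAverage_of_le {D : ℝ} (hDg : ∀ y, D ≤ g y) {n : ℕ} (hn : n ≠ 0) (y : Y) :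
    D ≤ birkhoffAverage ℝ S g n y := by
  rw [birkhoffAverage, birkhoffSum, smul_eq_mul, le_inv_mul_iff₀ (by positivity)]
  simpa using Finset.card_nsmul_le_sum (Finset.range n) _ _ fun k _ => hDg (S^[k] y)

theorem birkhoffAverage_nonneg (hg : 0 ≤ g) (n : ℕ) (y : Y) : 0 ≤ birkhoffAverage ℝ S g n y := by
  rcases eq_or_ne n 0 with rfl | hn
  · simp
  · exact le_birkhoffAverage_of_le hg hn y

/-- Chop the orbit segment into blocks of length at most `M` on which the average is below `ε`;
only the last, incomplete block costs the error term `M * D`. -/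
theorem birkhoffSum_le_of_forall_exists_lt {ε D : ℝ} {M : ℕ} (hε : 0 ≤ ε) (hD : 0 ≤ D)
    (hgD : ∀ y, g y ≤ D) (hM : ∀ y, ∃ n ≤ M, birkhoffSum S g n y < ε * n) (L : ℕ) (y : Y) :
    birkhoffSum S g L y ≤ ε * L + M * D := by
  induction L using Nat.strong_induction_on generalizing y with
  | _ L ih =>
    obtain ⟨n, hnM, hn⟩ := hM y
    rcases le_or_gt L M with hLM | hML
    · have hL : birkhoffSum S g L y ≤ L * D := by
        simpa [birkhoffSum] using
          Finset.sum_le_card_nsmul (Finset.range L) _ _ fun k _ => hgD (S^[k] y)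
      have : (L : ℝ) ≤ M := by exact_mod_cast hLM
      nlinarith
    · have hn0 : n ≠ 0 := by rintro rfl; simp at hn
      have hsplit := birkhoffSum_add S g n (L - n) y
      rw [Nat.add_sub_cancel' (by omega)] at hsplit
      have hrest := ih (L - n) (by omega) (S^[n] y)
      rw [Nat.cast_sub (by omega)] at hrest
      linarith

variable [TopologicalSpace Y]

theorem Continuous.birkhoffSum (hS : Continuous S) (hg : Continuous g) (n : ℕ) :
    Continuous (birkhoffSum S g n) :=
  continuous_finsetSum _ fun k _ => hg.comp (hS.iterate k)

theorem exists_forall_exists_le_birkhoffSum_lt [CompactSpace Y] (hS : Continuous S)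
    (hg : Continuous g) {ε : ℝ} (h : ∀ y, ∃ n, birkhoffSum S g n y < ε * n) :
    ∃ M, ∀ y, ∃ n ≤ M, birkhoffSum S g n y < ε * n := by
  obtain ⟨t, ht⟩ := isCompact_univ.elim_finite_subcover
    (fun n => {y | birkhoffSum S g n y < ε * n})
    (fun n => isOpen_lt (hS.birkhoffSum hg n) continuous_const)
    (fun y _ => mem_iUnion.2 (h y))
  refine ⟨t.sup id, fun y => ?_⟩
  obtain ⟨n, hnt, hn⟩ := mem_iUnion₂.1 (ht (mem_univ y))
  exact ⟨n, Finset.le_sup (f := id) hnt, hn⟩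

theorem isBoundedUnder_le_birkhoffAverage [CompactSpace Y] (hg : Continuous g) (y : Y) :
    IsBoundedUnder (· ≤ ·) atTop (birkhoffAverage ℝ S g · y) := by
  obtain ⟨D, hD⟩ := (isCompact_range hg).bddAbove
  exact isBoundedUnder_of_eventually_le ((eventually_ne_atTop 0).mono fun n hn =>
    birkhoffAverage_le_of_le (fun z => hD (mem_range_self z)) hn y)

theorem tendsto_birkhoffAverage_zero_of_liminf_nonpos [CompactSpace Y] (hS : Continuous S)
    (hg : Continuous g) (hg0 : 0 ≤ g) (h : ∀ y, liminf (birkhoffAverage ℝ S g · y) atTop ≤ 0)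
    (y : Y) : Tendsto (birkhoffAverage ℝ S g · y) atTop (𝓝 0) := by
  obtain ⟨D, hgD⟩ := (isCompact_range hg).bddAbove
  replace hgD : ∀ y, g y ≤ max D 0 := fun y => (hgD (mem_range_self y)).trans (le_max_left _ _)
  refine tendsto_order.2 ⟨fun a ha => Eventually.of_forall fun n =>
    ha.trans_le (birkhoffAverage_nonneg hg0 n y), fun a ha => ?_⟩
  have hsum : ∀ y, ∃ n, birkhoffSum S g n y < a / 2 * n := fun y => by
    obtain ⟨n, hn, hn0⟩ := ((frequently_lt_of_liminf_lt
      (isBoundedUnder_le_birkhoffAverage hg y).isCoboundedUnder_ge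
      ((h y).trans_lt (half_pos ha))).and_eventually (eventually_ne_atTop 0)).exists
    refine ⟨n, ?_⟩
    rw [birkhoffAverage, smul_eq_mul, inv_mul_lt_iff₀ (by positivity)] at hn
    linarith
  obtain ⟨M, hM⟩ := exists_forall_exists_le_birkhoffSum_lt hS hg hsum
  filter_upwards [(tendsto_const_div_atTop_nhds_zero_nat (M * max D 0)).eventually
    (gt_mem_nhds (half_pos ha)), eventually_ne_atTop 0] with L hL hL0
  have hbound := birkhoffSum_le_of_forall_exists_lt (by positivity) (le_max_right D 0) hgD hM L y
  have hLpos : (0 : ℝ) < L := by positivity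
  calc birkhoffAverage ℝ S g L y = birkhoffSum S g L y / L := by
        rw [birkhoffAverage, smul_eq_mul, inv_mul_eq_div]
    _ ≤ (a / 2 * L + M * max D 0) / L := by gcongr
    _ = a / 2 + M * max D 0 / L := by field_simp
    _ < a := by linarith

theorem exists_le_of_tendsto_birkhoffAverage [CompactSpace Y] [Nonempty Y] (hg : Continuous g)
    {y : Y} {c : ℝ} (h : Tendsto (birkhoffAverage ℝ S g · y) atTop (𝓝 c)) : ∃ z, g z ≤ c := by
  obtain ⟨z, -, hz⟩ := isCompact_univ.exists_isMinOn univ_nonempty hg.continuousOn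
  refine ⟨z, ge_of_tendsto h ?_⟩
  filter_upwards [eventually_ne_atTop 0] with n hn
  exact le_birkhoffAverage_of_le (fun w => hz (mem_univ w)) hn y

end BirkhoffAverage

theorem MeasureTheory.measurePreserving_iff_forall_measure_preimage {α : Type*}
    [MeasurableSpace α] {f : α → α} (hf : Measurable f) {μ : Measure α} :
    MeasurePreserving f μ μ ↔ ∀ s, MeasurableSet s → μ (f ⁻¹' s) = μ s :=
  ⟨fun h _ hs => h.measure_preimage hs.nullMeasurableSet,
    fun h => ⟨hf, Measure.ext fun s hs => by rw [Measure.map_apply hf hs, h s hs]⟩⟩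

theorem MeasureTheory.Measure.eq_dirac_of_ae_eq {Y : Type*} [MeasurableSpace Y]
    [MeasurableSingletonClass Y] {μ : Measure Y} [IsProbabilityMeasure μ] {y₀ : Y}
    (h : ∀ᵐ y ∂μ, y = y₀) : μ = Measure.dirac y₀ := by
  calc μ = μ.map id := Measure.map_id.symm
    _ = μ.map fun _ => y₀ := Measure.map_congr h
    _ = Measure.dirac y₀ := by simp [Measure.map_const]

theorem MeasureTheory.Measure.measure_diagonal_eq_one_of_map_eq_dirac {X : Type*}
    [MeasurableSpace X] [MeasurableEq X] {ν : Measure (X × X)} [IsProbabilityMeasure ν] {x₀ : X}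
    (h₁ : ν.map Prod.fst = dirac x₀) (h₂ : ν.map Prod.snd = dirac x₀) :
    ν (diagonal X) = 1 := by
  have hfst : ∀ᵐ p ∂ν, x₀ = p.1 :=
    ae_of_ae_map measurable_fst.aemeasurable (by rw [h₁, ae_dirac_eq]; exact rfl)
  have hsnd : ∀ᵐ p ∂ν, x₀ = p.2 :=
    ae_of_ae_map measurable_snd.aemeasurable (by rw [h₂, ae_dirac_eq]; exact rfl)
  rw [← measure_univ (μ := ν), ← ae_mem_iff_measure_eq measurableSet_diagonal.nullMeasurableSet]
  filter_upwards [hfst, hsnd] with p hp₁ hp₂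
  exact hp₁.symm.trans hp₂

section Invariant

variable {Y : Type*} [MeasurableSpace Y] {S : Y → Y} {μ : Measure Y} {g : Y → ℝ}

theorem MeasureTheory.MeasurePreserving.integral_birkhoffAverage (hS : MeasurePreserving S μ μ)
    (hg : Integrable g μ) {n : ℕ} (hn : n ≠ 0) :
    ∫ y, birkhoffAverage ℝ S g n y ∂μ = ∫ y, g y ∂μ := by
  have hterm : ∀ k, ∫ y, g (S^[k] y) ∂μ = ∫ y, g y ∂μ := fun k => by
    rw [← integral_map (hS.iterate k).aemeasurable (by rw [(hS.iterate k).map_eq]; exact hg.1),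
      (hS.iterate k).map_eq]
  simp only [birkhoffAverage, birkhoffSum, smul_eq_mul]
  rw [integral_const_mul, integral_finsetSum (f := fun k y => g (S^[k] y)) _
    fun k _ => (hS.iterate k).integrable_comp_of_integrable hg]
  simp [hterm, hn]

theorem MeasureTheory.MeasurePreserving.integral_eq_of_tendsto_birkhoffAverage
    [IsFiniteMeasure μ] (hS : MeasurePreserving S μ μ) (hgm : AEStronglyMeasurable g μ) {C : ℝ}
    (hgC : ∀ y, ‖g y‖ ≤ C) {φ : Y → ℝ}
    (hφ : ∀ᵐ y ∂μ, Tendsto (birkhoffAverage ℝ S g · y) atTop (𝓝 (φ y))) :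
    ∫ y, g y ∂μ = ∫ y, φ y ∂μ := by
  have hg : Integrable g μ := .of_bound hgm C (.of_forall hgC)
  refine tendsto_nhds_unique ?_ (tendsto_integral_of_dominated_convergence (fun _ => C) ?_
    (integrable_const C) (fun n => .of_forall fun y => ?_) hφ)
  · exact tendsto_const_nhds.congr' ((eventually_ne_atTop 0).mono fun n hn =>
      (hS.integral_birkhoffAverage hg hn).symm)
  · intro n
    change AEStronglyMeasurable (fun y => (n : ℝ)⁻¹ • ∑ k ∈ Finset.range n, g (S^[k] y)) μ
    exact (Finset.aestronglyMeasurable_fun_sum _ fun k _ =>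
      hgm.comp_measurePreserving (hS.iterate k)).const_smul ((n : ℝ)⁻¹)
  · rcases eq_or_ne n 0 with rfl | hn
    · simpa using (norm_nonneg _).trans (hgC y)
    · rw [Real.norm_eq_abs, abs_le]
      exact ⟨le_birkhoffAverage_of_le (fun y => neg_le_of_abs_le (hgC y)) hn y,
        birkhoffAverage_le_of_le (fun y => le_of_abs_le (hgC y)) hn y⟩

end Invariant

section KrylovBogolyubov

variable {Y : Type*} [MeasurableSpace Y]

/-- Since `(0 : ℝ≥0∞)⁻¹ = ∞`, the value at `n = 0` is `∞ • 0 = 0`, matching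
`birkhoffAverage ℝ S g 0 = 0`. -/
noncomputable def empiricalMeasure (S : Y → Y) (y : Y) (n : ℕ) : Measure Y :=
  (n : ENNReal)⁻¹ • ∑ k ∈ Finset.range n, Measure.dirac (S^[k] y)

theorem isProbabilityMeasure_empiricalMeasure (S : Y → Y) (y : Y) {n : ℕ} (hn : n ≠ 0) :
    IsProbabilityMeasure (empiricalMeasure S y n) := by
  constructor
  simp [empiricalMeasure, ENNReal.inv_mul_cancel (Nat.cast_ne_zero.2 hn) (ENNReal.natCast_ne_top n)]

theorem integral_empiricalMeasure [MeasurableSingletonClass Y] (S : Y → Y) (g : Y → ℝ) (y : Y)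
    (n : ℕ) : ∫ z, g z ∂(empiricalMeasure S y n) = birkhoffAverage ℝ S g n y := by
  rw [empiricalMeasure, integral_smul_measure,
    integral_finsetSum_measure fun k _ => integrable_dirac enorm_lt_top]
  simp [birkhoffAverage, birkhoffSum, integral_dirac]

theorem exists_invariant_le_integral_of_frequently [MetricSpace Y] [CompactSpace Y] [BorelSpace Y]
    {S : Y → Y} (hS : Continuous S) {f : Y → ℝ} (hf : Continuous f) {y : Y} {c : ℝ}
    (h : ∃ᶠ n in atTop, c ≤ birkhoffAverage ℝ S f n y) :
    ∃ μ : Measure Y, IsProbabilityMeasure μ ∧ MeasurePreserving S μ μ ∧ c ≤ ∫ z, f z ∂μ := by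
  -- shifted by one so that every empirical measure is a probability measure
  let u : ℕ → ProbabilityMeasure Y := fun n =>
    ⟨empiricalMeasure S y (n + 1), isProbabilityMeasure_empiricalMeasure S y n.succ_ne_zero⟩
  have hfreq : ∃ᶠ n in atTop, c ≤ birkhoffAverage ℝ S f (n + 1) y :=
    (tendsto_sub_atTop_nat 1).frequently <| (h.and_eventually (eventually_ne_atTop 0)).mono
      fun n ⟨hn, hn0⟩ => by rwa [Nat.sub_add_cancel (Nat.one_le_iff_ne_zero.2 hn0)]
  have := frequently_iff_neBot.1 hfreq
  let U := Ultrafilter.of (atTop ⊓ 𝓟 {n | c ≤ birkhoffAverage ℝ S f (n + 1) y})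
  have hU : (U : Filter ℕ) ≤ atTop := (Ultrafilter.of_le _).trans inf_le_left
  obtain ⟨μ, -, hμ⟩ := isCompact_univ.ultrafilter_le_nhds (U.map u) (by simp)
  have hlim : ∀ g : C(Y, ℝ),
      Tendsto (fun n => birkhoffAverage ℝ S g (n + 1) y) U (𝓝 (∫ z, g z ∂μ)) := fun g =>
    (((ProbabilityMeasure.continuous_integral_continuousMap g).tendsto μ).comp hμ).congr
      fun n => integral_empiricalMeasure S g y (n + 1)
  refine ⟨μ, inferInstance, ⟨hS.measurable, ext_of_forall_integral_eq_of_IsFiniteMeasure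
    fun g => ?_⟩, ge_of_tendsto (hlim ⟨f, hf⟩) ((Ultrafilter.of_le _).trans inf_le_right
      (mem_principal_self _))⟩
  rw [integral_map hS.aemeasurable g.continuous.aestronglyMeasurable]
  -- the averages of `g ∘ S` and of `g` along the orbit differ by `O(1/n)`
  have hshift := ((tendsto_birkhoffAverage_apply_sub_birkhoffAverage' ℝ g.isBounded_range S y).comp
    (tendsto_add_atTop_nat 1)).mono_left hU
  refine tendsto_nhds_unique (hlim (g.toContinuousMap.comp ⟨S, hS⟩)) ?_
  simpa [birkhoffAverage_comp_self] using hshift.add (hlim g.toContinuousMap)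

theorem liminf_birkhoffAverage_eq_zero_of_forall_integral_eq_zero [MetricSpace Y]
    [CompactSpace Y] [BorelSpace Y] {S : Y → Y} (hS : Continuous S)
    {g : Y → ℝ} (hg : Continuous g) (hg0 : 0 ≤ g)
    (h : ∀ μ : Measure Y, IsProbabilityMeasure μ → MeasurePreserving S μ μ → ∫ z, g z ∂μ = 0)
    (y : Y) : liminf (birkhoffAverage ℝ S g · y) atTop = 0 := by
  have hnonneg : ∀ᶠ n in atTop, 0 ≤ birkhoffAverage ℝ S g n y :=
    .of_forall fun n => birkhoffAverage_nonneg hg0 n y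
  refine le_antisymm ?_ (le_liminf_of_le
    (isBoundedUnder_le_birkhoffAverage hg y).isCoboundedUnder_ge hnonneg)
  by_contra! hpos
  obtain ⟨μ, hμ, hSμ, hle⟩ := exists_invariant_le_integral_of_frequently hS hg
    ((eventually_lt_of_lt_liminf (half_lt_self hpos)
      (isBoundedUnder_of_eventually_ge hnonneg)).frequently.mono fun _ => le_of_lt)
  linarith [h μ hμ hSμ, half_pos hpos]

end KrylovBogolyubov

section MeanProximal

variable {X : Type*}

theorem birkhoffAvg_eq_birkhoffAverage [PseudoMetricSpace X] (T : X → X) (x y : X) :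
    birkhoffAvg T x y = (birkhoffAverage ℝ (Prod.map T T) (fun p => dist p.1 p.2) · (x, y)) := by
  ext N
  simp [birkhoffAvg, birkhoffAverage, birkhoffSum, div_eq_inv_mul]

theorem birkhoffAvg_nonneg [PseudoMetricSpace X] (T : X → X) (x y : X) (N : ℕ) :
    0 ≤ birkhoffAvg T x y N := by
  unfold birkhoffAvg
  positivity

theorem birkhoffAvg_prodMap_le [PseudoMetricSpace X] (T : X → X) (u v : X × X) (N : ℕ) :
    birkhoffAvg (Prod.map T T) u v N ≤ birkhoffAvg T u.1 v.1 N + birkhoffAvg T u.2 v.2 N := by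
  simp only [birkhoffAvg, ← add_div, ← Finset.sum_add_distrib]
  gcongr with k
  rw [Prod.map_iterate, Prod.dist_eq]
  exact max_le_add_of_nonneg dist_nonneg dist_nonneg

theorem meanProximalPair_prodMap_iff [PseudoMetricSpace X] {T : X → X} {x y : X} :
    MeanProximalPair (Prod.map T T) (x, x) (y, y) ↔ MeanProximalPair T x y := by
  have : birkhoffAvg (Prod.map T T) (x, x) (y, y) = birkhoffAvg T x y := by
    ext N
    simp [birkhoffAvg, Prod.dist_eq]
  rw [MeanProximalPair, MeanProximalPair, this]

theorem tendsto_birkhoffAvg_prodMap [PseudoMetricSpace X] {T : X → X}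
    (h : ∀ x y : X, Tendsto (birkhoffAvg T x y) atTop (𝓝 0)) (u v : X × X) :
    Tendsto (birkhoffAvg (Prod.map T T) u v) atTop (𝓝 0) :=
  squeeze_zero (birkhoffAvg_nonneg _ u v) (birkhoffAvg_prodMap_le T u v)
    (by simpa using (h u.1 v.1).add (h u.2 v.2))

theorem tendsto_birkhoffAvg_of_forall_meanProximalPair [PseudoMetricSpace X] [CompactSpace X]
    {T : X → X} (hT : Continuous T) (h : ∀ x y : X, MeanProximalPair T x y) (x y : X) :
    Tendsto (birkhoffAvg T x y) atTop (𝓝 0) := by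
  rw [birkhoffAvg_eq_birkhoffAverage]
  refine tendsto_birkhoffAverage_zero_of_liminf_nonpos (hT.prodMap hT) continuous_dist
    (fun _ => dist_nonneg) (fun p => ?_) (x, y)
  simpa [MeanProximalPair, birkhoffAvg_eq_birkhoffAverage] using (h p.1 p.2).le

theorem exists_isFixedPt_of_tendsto_birkhoffAvg [MetricSpace X] [CompactSpace X] {T : X → X}
    (hT : Continuous T) {x : X} (h : Tendsto (birkhoffAvg T x (T x)) atTop (𝓝 0)) :
    ∃ x₀, Function.IsFixedPt T x₀ := by
  have : Nonempty X := ⟨x⟩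
  have havg : birkhoffAvg T x (T x) = (birkhoffAverage ℝ T (fun w => dist w (T w)) · x) := by
    ext N
    simp [birkhoffAvg, birkhoffAverage, birkhoffSum, div_eq_inv_mul,
      ← Function.iterate_succ_apply' T, Function.iterate_succ_apply]
  obtain ⟨z, hz⟩ := exists_le_of_tendsto_birkhoffAverage (continuous_id.dist hT) (havg ▸ h)
  exact ⟨z, (dist_le_zero.1 hz).symm⟩

theorem eq_dirac_of_tendsto_birkhoffAvg [MetricSpace X] [CompactSpace X] [MeasurableSpace X]
    [BorelSpace X] {T : X → X} {x₀ : X} (hx₀ : Function.IsFixedPt T x₀)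
    (h : ∀ x, Tendsto (birkhoffAvg T x x₀) atTop (𝓝 0)) {μ : Measure X} [IsProbabilityMeasure μ]
    (hμ : MeasurePreserving T μ μ) : μ = Measure.dirac x₀ := by
  have hcont : Continuous (dist · x₀) := continuous_id.dist continuous_const
  have havg : ∀ x, birkhoffAvg T x x₀ = (birkhoffAverage ℝ T (dist · x₀) · x) := fun x => by
    ext N
    simp [birkhoffAvg, birkhoffAverage, birkhoffSum, div_eq_inv_mul, Function.iterate_fixed hx₀]
  obtain ⟨C, hC⟩ := (isCompact_range hcont).bddAbove
  have hbound : ∀ z, ‖dist z x₀‖ ≤ C := fun z => by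
    rw [Real.norm_of_nonneg dist_nonneg]
    exact hC (mem_range_self z)
  have hzero : ∫ z, dist z x₀ ∂μ = 0 := by
    simpa using hμ.integral_eq_of_tendsto_birkhoffAverage hcont.aestronglyMeasurable hbound
      (φ := 0) (.of_forall fun x => havg x ▸ h x)
  have hae := (integral_eq_zero_iff_of_nonneg (fun z => dist_nonneg)
    (.of_bound hcont.aestronglyMeasurable C (.of_forall hbound))).1 hzero
  exact Measure.eq_dirac_of_ae_eq (hae.mono fun z hz => dist_eq_zero.1 hz)

theorem measure_diagonal_eq_one_of_forall_eq_dirac [MeasurableSpace X] [MeasurableEq X]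
    {T : X → X} (hT : Measurable T) {x₀ : X}
    (huniq : ∀ μ : Measure X, IsProbabilityMeasure μ → MeasurePreserving T μ μ →
      μ = Measure.dirac x₀)
    {ν : Measure (X × X)} [IsProbabilityMeasure ν] (hν : MeasurePreserving (Prod.map T T) ν ν) :
    ν (diagonal X) = 1 :=
  ν.measure_diagonal_eq_one_of_map_eq_dirac
    (huniq _ (Measure.isProbabilityMeasure_map measurable_fst.aemeasurable)
      (.of_semiconj ⟨measurable_fst, rfl⟩ hν (fun _ => rfl) hT))
    (huniq _ (Measure.isProbabilityMeasure_map measurable_snd.aemeasurable)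
      (.of_semiconj ⟨measurable_snd, rfl⟩ hν (fun _ => rfl) hT))

theorem meanProximalPair_of_forall_measure_diagonal_eq_one [MetricSpace X] [CompactSpace X]
    [MeasurableSpace X] [BorelSpace X] {T : X → X} (hT : Continuous T)
    (h : ∀ ν : Measure (X × X), IsProbabilityMeasure ν → MeasurePreserving (Prod.map T T) ν ν →
      ν (diagonal X) = 1)
    (x y : X) : MeanProximalPair T x y := by
  rw [MeanProximalPair, birkhoffAvg_eq_birkhoffAverage]
  refine liminf_birkhoffAverage_eq_zero_of_forall_integral_eq_zero (hT.prodMap hT)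
    continuous_dist (fun _ => dist_nonneg) (fun ν hν hTν => integral_eq_zero_of_ae ?_) (x, y)
  have hdiag : ∀ᵐ p ∂ν, p ∈ diagonal X :=
    (ae_mem_iff_measure_eq measurableSet_diagonal.nullMeasurableSet).2
      (by rw [h ν hν hTν, measure_univ])
  exact hdiag.mono fun p hp => dist_eq_zero.2 hp

end MeanProximal

/-- Characterizations of mean proximal systems: mean proximality, mean asymptoticity,
all invariant measures of the product supported on the diagonal, unique ergodicity
with a Dirac measure at a fixed point, and mean proximality of the product system
are all equivalent. -/
theorem meanProximal_tfae
    {X : Type*} [MetricSpace X] [CompactSpace X] [Nonempty X]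
    [MeasurableSpace X] [BorelSpace X]
    (T : X → X) (hT : Continuous T) :
    List.TFAE
      [ ∀ x y : X, MeanProximalPair T x y,
        ∀ x y : X, Tendsto (birkhoffAvg T x y) atTop (nhds 0),
        ∀ ν : Measure (X × X), IsProbabilityMeasure ν →
          (∀ B : Set (X × X), MeasurableSet B → ν (Prod.map T T ⁻¹' B) = ν B) →
          ν (Set.diagonal X) = 1,
        ∃ x₀ : X, T x₀ = x₀ ∧
          (∀ B : Set X, MeasurableSet B →
            Measure.dirac x₀ (T ⁻¹' B) = Measure.dirac x₀ B) ∧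
          (∀ μ : Measure X, IsProbabilityMeasure μ →
            (∀ B : Set X, MeasurableSet B → μ (T ⁻¹' B) = μ B) →
            μ = Measure.dirac x₀),
        ∀ u v : X × X, MeanProximalPair (Prod.map T T) u v ] := by
  have hTm : Measurable T := hT.measurable
  have hinv {μ : Measure X} := measurePreserving_iff_forall_measure_preimage hTm (μ := μ)
  have hinv₂ {ν : Measure (X × X)} :=
    measurePreserving_iff_forall_measure_preimage (hTm.prodMap hTm) (μ := ν)
  tfae_have 1 → 2 := tendsto_birkhoffAvg_of_forall_meanProximalPair hT
  tfae_have 2 → 5 := fun h u v => (tendsto_birkhoffAvg_prodMap h u v).liminf_eq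
  tfae_have 5 → 1 := fun h x y => meanProximalPair_prodMap_iff.1 (h (x, x) (y, y))
  tfae_have 2 → 4 := fun h => by
    obtain ⟨x₀, hx₀⟩ := exists_isFixedPt_of_tendsto_birkhoffAvg hT (h (Classical.arbitrary X) _)
    refine ⟨x₀, hx₀, hinv.1 ⟨hTm, by rw [Measure.map_dirac' hTm, hx₀]⟩, fun μ _ hμ => ?_⟩
    exact eq_dirac_of_tendsto_birkhoffAvg hx₀ (h · x₀) (hinv.2 hμ)
  tfae_have 4 → 3 := fun ⟨x₀, _, _, huniq⟩ ν _ hν =>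
    measure_diagonal_eq_one_of_forall_eq_dirac hTm (fun μ hμ hTμ => huniq μ hμ (hinv.1 hTμ))
      (hinv₂.2 hν)
  tfae_have 3 → 1 := fun h =>
    meanProximalPair_of_forall_measure_diagonal_eq_one hT fun ν hν hTν => h ν hν (hinv₂.1 hTν)
  tfae_finish
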